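/- arXiv:2404.12082 — 2 statements merged into one kernel-verified Lean document; each statement's English description precedes it below -/
import Mathlib

section
/- Let G be a finite graph that is K_3-free, (K_1+2K_2)-free, (K_1+C_5)-free, and C_6-free, and let I be a maximal independent set of G. Then the graph G' obtained by adding a new vertex v' adjacent exactly to the vertices of I is (K_1+2K_2)-free. -/
/-- The 6-cycle `C₆`. -/
def C6 : SimpleGraph (ZMod 6) :=
  SimpleGraph.fromRel (fun i j => j = i + 1)

/-- The graph `K₁ + 2K₂`: vertex 0 is isolated, with edges 1-2 and 3-4. -/
def K1plus2K2 : SimpleGraph (Fin 5) :=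
  SimpleGraph.fromRel (fun i j => (i = 1 ∧ j = 2) ∨ (i = 3 ∧ j = 4))

/-- The graph `K₁ + C₅`: vertex 0 is isolated and 1,2,3,4,5 form a 5-cycle. -/
def K1plusC5 : SimpleGraph (Fin 6) :=
  SimpleGraph.fromRel (fun i j =>
    (i = 1 ∧ j = 2) ∨ (i = 2 ∧ j = 3) ∨ (i = 3 ∧ j = 4) ∨ (i = 4 ∧ j = 5) ∨ (i = 5 ∧ j = 1))

/-- `I` is an independent set of vertices of `G`. -/
def IsIndep {V : Type*} (G : SimpleGraph V) (I : Set V) : Prop :=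
  ∀ x ∈ I, ∀ y ∈ I, ¬ G.Adj x y

/-- The graph obtained from `G` by adding a new vertex (`none`) adjacent exactly to
the vertices of `I`. -/
def addVertex {V : Type*} (G : SimpleGraph V) (I : Set V) : SimpleGraph (Option V) :=
  SimpleGraph.fromRel (fun a b =>
    (∃ x y, a = some x ∧ b = some y ∧ G.Adj x y) ∨ (a = none ∧ ∃ x ∈ I, b = some x))


/-!
Write `v'` for the new vertex. Since `G` has no induced `K₁ + 2K₂`, such a copy in `G'` must use
`v'`, and by maximality every vertex outside `I` has a neighbour in `I`.

If `v'` is the isolated vertex, the two edges `bc`, `de` avoid `I`. A vertex `x ∈ I` adjacent to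
`b` cannot also be adjacent to `d`: chasing `I`-neighbours of `c` and `e` then yields an induced
`C₆`, `K₁ + C₅` or `K₁ + 2K₂` in `G`. So with `x ∈ I` adjacent to `b` and `u ∈ I` adjacent to `c`,
the vertex `x` and the edges `uc`, `de` induce `K₁ + 2K₂` in `G`.

If `v'` is an endpoint of an edge `v'c`, then `c ∈ I`, while the isolated vertex `a` and the other
edge `de` avoid `I`. An `I`-neighbour `x` of `a`, together with an `I`-neighbour of `e` when `x` is
adjacent to `d`, again yields an induced `K₁ + 2K₂` or `K₁ + C₅` in `G`.
-/

open SimpleGraph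

section

variable {V W : Type*} {G : SimpleGraph V} {I : Set V} {a b c d e x : V}

def SimpleGraph.Embedding.ofAdjIff [LinearOrder W] {H : SimpleGraph W}
    (hH : ∀ i j, (∀ k, H.Adj i k ↔ H.Adj j k) → i = j) (f : W → V)
    (hf : ∀ i j, i < j → (G.Adj (f i) (f j) ↔ H.Adj i j)) : H ↪g G :=
  have hf' (i j : W) : G.Adj (f i) (f j) ↔ H.Adj i j := by
    rcases lt_trichotomy i j with h | rfl | h
    · exact hf i j h
    · simp
    · rw [adj_comm, H.adj_comm, hf j i h]
  { toFun := f
    inj' := fun i j hij => hH i j fun k => by rw [← hf', ← hf', hij]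
    map_rel_iff' := hf' _ _ }

set_option synthInstance.maxSize 1000 in
theorem nonempty_K1plusC5_embedding {p q r s t : V}
    (hpq : G.Adj p q) (hqr : G.Adj q r) (hrs : G.Adj r s) (hst : G.Adj s t) (hpt : G.Adj p t)
    (hpr : ¬G.Adj p r) (hps : ¬G.Adj p s) (hqs : ¬G.Adj q s) (hqt : ¬G.Adj q t)
    (hrt : ¬G.Adj r t) (hap : ¬G.Adj a p) (haq : ¬G.Adj a q) (har : ¬G.Adj a r)
    (has : ¬G.Adj a s) (hat : ¬G.Adj a t) : Nonempty (K1plusC5 ↪g G) := by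
  refine ⟨.ofAdjIff ?_ ![a, p, q, r, s, t] ?_⟩
  · simp only [K1plusC5, fromRel_adj]
    decide
  · intro i j hij
    fin_cases i <;> fin_cases j <;> simp_all [K1plusC5]

theorem nonempty_C6_embedding {p q r s t u : V}
    (hpq : G.Adj p q) (hqr : G.Adj q r) (hrs : G.Adj r s) (hst : G.Adj s t) (htu : G.Adj t u)
    (hpu : G.Adj p u) (hpr : ¬G.Adj p r) (hps : ¬G.Adj p s) (hpt : ¬G.Adj p t)
    (hqs : ¬G.Adj q s) (hqt : ¬G.Adj q t) (hqu : ¬G.Adj q u) (hrt : ¬G.Adj r t)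
    (hru : ¬G.Adj r u) (hsu : ¬G.Adj s u) : Nonempty (C6 ↪g G) := by
  -- `C6` read on `Fin 6`, which is `ZMod 6` by definition
  refine ⟨.ofAdjIff (H := fromRel fun (i j : Fin 6) => j = i + 1) ?_ ![p, q, r, s, t, u] ?_⟩
  · simp only [fromRel_adj]
    decide
  · intro i j hij
    fin_cases i <;> fin_cases j <;> simp_all

def SimpleGraph.IsInduced2K2 (G : SimpleGraph V) (b c d e : V) : Prop :=
  G.Adj b c ∧ G.Adj d e ∧ ¬G.Adj b d ∧ ¬G.Adj b e ∧ ¬G.Adj c d ∧ ¬G.Adj c e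

def SimpleGraph.IsK1plus2K2 (G : SimpleGraph V) (a b c d e : V) : Prop :=
  G.IsInduced2K2 b c d e ∧ ¬G.Adj a b ∧ ¬G.Adj a c ∧ ¬G.Adj a d ∧ ¬G.Adj a e

namespace SimpleGraph

theorem IsInduced2K2.swap_left (h : G.IsInduced2K2 b c d e) : G.IsInduced2K2 c b d e :=
  let ⟨hbc, hde, hbd, hbe, hcd, hce⟩ := h
  ⟨hbc.symm, hde, hcd, hce, hbd, hbe⟩

theorem IsInduced2K2.swap_right (h : G.IsInduced2K2 b c d e) : G.IsInduced2K2 b c e d :=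
  let ⟨hbc, hde, hbd, hbe, hcd, hce⟩ := h
  ⟨hbc, hde.symm, hbe, hbd, hce, hcd⟩

theorem IsInduced2K2.swap (h : G.IsInduced2K2 b c d e) : G.IsInduced2K2 d e b c := by
  obtain ⟨hbc, hde, hbd, hbe, hcd, hce⟩ := h
  refine ⟨hde, hbc, ?_, ?_, ?_, ?_⟩ <;> rwa [adj_comm]

theorem IsK1plus2K2.swap_left (h : G.IsK1plus2K2 a b c d e) : G.IsK1plus2K2 a c b d e :=
  let ⟨h2K2, hab, hac, had, hae⟩ := h
  ⟨h2K2.swap_left, hac, hab, had, hae⟩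

theorem IsK1plus2K2.swap (h : G.IsK1plus2K2 a b c d e) : G.IsK1plus2K2 a d e b c :=
  let ⟨h2K2, hab, hac, had, hae⟩ := h
  ⟨h2K2.swap, had, hae, hab, hac⟩

theorem IsK1plus2K2.snd_ne (h : G.IsK1plus2K2 a b c d e) : b ≠ a ∧ b ≠ c ∧ b ≠ d ∧ b ≠ e := by
  obtain ⟨⟨hbc, hde, hbd, hbe, -, -⟩, -, hac, -, -⟩ := h
  refine ⟨?_, hbc.ne, ?_, ?_⟩ <;> rintro rfl
  · exact hac hbc
  · exact hbe hde
  · exact hbd hde.symm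

theorem CliqueFree.not_adj_of_adj_of_adj (h : G.CliqueFree 3) {u v w : V}
    (huv : G.Adj u v) (huw : G.Adj u w) : ¬G.Adj v w := fun hvw => by
  classical
  exact h {u, v, w} (is3Clique_triple_iff.2 ⟨huv, huw, hvw⟩)

end SimpleGraph

theorem nonempty_K1plus2K2_embedding_iff :
    Nonempty (K1plus2K2 ↪g G) ↔ ∃ a b c d e, G.IsK1plus2K2 a b c d e := by
  constructor
  · rintro ⟨f⟩
    refine ⟨f 0, f 1, f 2, f 3, f 4, ?_⟩
    simp only [IsK1plus2K2, IsInduced2K2, f.map_adj_iff]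
    simp [K1plus2K2]
  · rintro ⟨a, b, c, d, e, ⟨hbc, hde, hbd, hbe, hcd, hce⟩, hab, hac, had, hae⟩
    refine ⟨.ofAdjIff ?_ ![a, b, c, d, e] ?_⟩
    · simp only [K1plus2K2, fromRel_adj]
      decide
    · intro i j hij
      fin_cases i <;> fin_cases j <;> simp_all [K1plus2K2]

theorem IsIndep.exists_adj_of_maximal (hI : IsIndep G I)
    (hmax : ∀ J, IsIndep G J → I ⊆ J → J = I) {v : V} (hv : v ∉ I) : ∃ x ∈ I, G.Adj x v := by
  by_contra! hv'
  have hJ : IsIndep G (insert v I) := by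
    rintro x (rfl | hx) y (rfl | hy)
    · exact G.irrefl
    · exact fun h => hv' y hy h.symm
    · exact hv' x hx
    · exact hI x hx y hy
  exact hv (hmax _ hJ (Set.subset_insert v I) ▸ Set.mem_insert v I)

theorem SimpleGraph.IsInduced2K2.not_adj_of_mem_of_adj (hK3 : G.CliqueFree 3)
    (h2K2 : ∀ a b c d e, ¬G.IsK1plus2K2 a b c d e) (hC5 : ¬Nonempty (K1plusC5 ↪g G))
    (hC6 : ¬Nonempty (C6 ↪g G)) (hI : IsIndep G I) (hdom : ∀ v ∉ I, ∃ x ∈ I, G.Adj x v)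
    (h : G.IsInduced2K2 b c d e) (hc : c ∉ I) (he : e ∉ I) (hx : x ∈ I) (hxb : G.Adj x b) :
    ¬G.Adj x d := by
  intro hxd
  obtain ⟨hbc, hde, hbd, hbe, hcd, hce⟩ := h
  obtain ⟨u, hu, huc⟩ := hdom c hc
  obtain ⟨w, hw, hwe⟩ := hdom e he
  have hxc : ¬G.Adj x c := hK3.not_adj_of_adj_of_adj hxb.symm hbc
  have hcx : ¬G.Adj c x := hK3.not_adj_of_adj_of_adj hbc hxb.symm
  have hxe : ¬G.Adj x e := hK3.not_adj_of_adj_of_adj hxd.symm hde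
  have hbu : ¬G.Adj b u := hK3.not_adj_of_adj_of_adj hbc.symm huc.symm
  have hwd : ¬G.Adj w d := hK3.not_adj_of_adj_of_adj hwe.symm hde.symm
  by_cases hue : G.Adj u e
  · -- `x b c u e d` is an induced 6-cycle
    exact hC6 (nonempty_C6_embedding hxb hbc huc.symm hue hde.symm hxd hxc (hI x hx u hu) hxe
      hbu hbe hbd hce hcd (hK3.not_adj_of_adj_of_adj hue.symm hde.symm))
  by_cases hwc : G.Adj w c
  · -- `w c b x d e` is an induced 6-cycle
    exact hC6 (nonempty_C6_embedding hwc hbc.symm hxb.symm hxd hde hwe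
      (hK3.not_adj_of_adj_of_adj hwc.symm hbc.symm) (hI w hw x hx) hwd hcx hcd hce hbd hbe hxe)
  by_cases hud : G.Adj u d
  · by_cases hwb : G.Adj w b
    · -- `w b c u d e` is an induced 6-cycle
      exact hC6 (nonempty_C6_embedding hwb hbc huc.symm hud hde hwe hwc (hI w hw u hu) hwd hbu
        hbd hbe hcd hce hue)
    · -- `w` misses the induced 5-cycle `x b c u d`
      exact hC5 (nonempty_K1plusC5_embedding hxb hbc huc.symm hud hxd hxc (hI x hx u hu) hbu hbd
        hcd (hI w hw x hx) hwb hwc (hI w hw u hu) hwd)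
  · by_cases hwb : G.Adj w b
    · -- `u` misses the induced 5-cycle `w b x d e`
      exact hC5 (nonempty_K1plusC5_embedding hwb hxb.symm hxd hde hwe (hI w hw x hx) hwd hbd hbe
        hxe (hI u hu w hw) (fun hub => hbu hub.symm) (hI u hu x hx) hud hue)
    · exact h2K2 w u c x d ⟨⟨huc, hxd, hI u hu x hx, hud, hcx, hcd⟩, hI w hw u hu, hwc,
        hI w hw x hx, hwd⟩

theorem SimpleGraph.IsInduced2K2.false_of_not_mem (hK3 : G.CliqueFree 3)
    (h2K2 : ∀ a b c d e, ¬G.IsK1plus2K2 a b c d e) (hC5 : ¬Nonempty (K1plusC5 ↪g G))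
    (hC6 : ¬Nonempty (C6 ↪g G)) (hI : IsIndep G I) (hdom : ∀ v ∉ I, ∃ x ∈ I, G.Adj x v)
    (h : G.IsInduced2K2 b c d e) (hb : b ∉ I) (hc : c ∉ I) (hd : d ∉ I) (he : e ∉ I) : False := by
  have cross {b c d e x} :=
    @IsInduced2K2.not_adj_of_mem_of_adj _ G I b c d e x hK3 h2K2 hC5 hC6 hI hdom
  obtain ⟨hbc, hde, -, -, hcd, hce⟩ := id h
  obtain ⟨x, hx, hxb⟩ := hdom b hb
  obtain ⟨u, hu, huc⟩ := hdom c hc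
  exact h2K2 x u c d e ⟨⟨huc, hde, cross h.swap_left hb he hu huc,
    cross h.swap_left.swap_right hb hd hu huc, hcd, hce⟩, hI x hx u hu,
    hK3.not_adj_of_adj_of_adj hxb.symm hbc, cross h hc he hx hxb, cross h.swap_right hc hd hx hxb⟩

theorem false_of_mem_of_isolated_edge (hK3 : G.CliqueFree 3)
    (h2K2 : ∀ a b c d e, ¬G.IsK1plus2K2 a b c d e) (hC5 : ¬Nonempty (K1plusC5 ↪g G))
    (hI : IsIndep G I) (hdom : ∀ v ∉ I, ∃ x ∈ I, G.Adj x v) (hde : G.Adj d e) (hc : c ∈ I)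
    (hd : d ∉ I) (he : e ∉ I) (hcd : ¬G.Adj c d) (hce : ¬G.Adj c e) (ha : a ∉ I)
    (hac : ¬G.Adj a c) (had : ¬G.Adj a d) (hae : ¬G.Adj a e) : False := by
  obtain ⟨x, hx, hxa⟩ := hdom a ha
  have hca : ¬G.Adj c a := fun h => hac h.symm
  have hcx : ¬G.Adj c x := hI c hc x hx
  wlog hxe : ¬G.Adj x e generalizing d e
  · exact this hde.symm he hd hce hcd hae had
      (hK3.not_adj_of_adj_of_adj (not_not.1 hxe).symm hde.symm)
  by_cases hxd : G.Adj x d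
  · obtain ⟨z, hz, hze⟩ := hdom e he
    by_cases hza : G.Adj z a
    · -- `c` misses the induced 5-cycle `a x d e z`
      exact hC5 (nonempty_K1plusC5_embedding hxa.symm hxd hde hze.symm hza.symm had hae hxe
        (hI x hx z hz) (hK3.not_adj_of_adj_of_adj hde.symm hze.symm) hca hcx hcd hce
        (hI c hc z hz))
    · exact h2K2 c x a e z ⟨⟨hxa, hze.symm, hxe, hI x hx z hz, hae, fun haz => hza haz.symm⟩,
        hcx, hca, hce, hI c hc z hz⟩
  · exact h2K2 c x a d e ⟨⟨hxa, hde, hxd, hxe, had, hae⟩, hcx, hca, hcd, hce⟩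

@[simp] theorem addVertex_adj_some_some : (addVertex G I).Adj (some a) (some b) ↔ G.Adj a b := by
  simpa [addVertex, fromRel_adj, adj_comm] using G.ne_of_adj

@[simp] theorem addVertex_adj_none_some : (addVertex G I).Adj none (some a) ↔ a ∈ I := by
  simp [addVertex, fromRel_adj]

@[simp] theorem addVertex_adj_some_none : (addVertex G I).Adj (some a) none ↔ a ∈ I := by
  simp [addVertex, fromRel_adj]

@[simp] theorem isInduced2K2_addVertex_some :
    (addVertex G I).IsInduced2K2 (some b) (some c) (some d) (some e) ↔ G.IsInduced2K2 b c d e := by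
  simp [IsInduced2K2]

@[simp] theorem isK1plus2K2_addVertex_some :
    (addVertex G I).IsK1plus2K2 (some a) (some b) (some c) (some d) (some e) ↔
      G.IsK1plus2K2 a b c d e := by
  simp [IsK1plus2K2]

theorem not_isK1plus2K2_addVertex_none (hK3 : G.CliqueFree 3)
    (h2K2 : ∀ a b c d e, ¬G.IsK1plus2K2 a b c d e) (hC5 : ¬Nonempty (K1plusC5 ↪g G))
    (hC6 : ¬Nonempty (C6 ↪g G)) (hI : IsIndep G I) (hdom : ∀ v ∉ I, ∃ x ∈ I, G.Adj x v)
    {b c d e : V} : ¬(addVertex G I).IsK1plus2K2 none (some b) (some c) (some d) (some e) := by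
  rintro ⟨h, hb, hc, hd, he⟩
  rw [isInduced2K2_addVertex_some] at h
  rw [addVertex_adj_none_some] at hb hc hd he
  exact h.false_of_not_mem hK3 h2K2 hC5 hC6 hI hdom hb hc hd he

theorem not_isK1plus2K2_addVertex_snd_none (hK3 : G.CliqueFree 3)
    (h2K2 : ∀ a b c d e, ¬G.IsK1plus2K2 a b c d e) (hC5 : ¬Nonempty (K1plusC5 ↪g G))
    (hI : IsIndep G I) (hdom : ∀ v ∉ I, ∃ x ∈ I, G.Adj x v) {a c d e : Option V} :
    ¬(addVertex G I).IsK1plus2K2 a none c d e := by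
  intro h
  obtain ⟨ha, hc, hd, he⟩ := h.snd_ne
  obtain ⟨a, rfl⟩ := Option.ne_none_iff_exists.1 ha.symm
  obtain ⟨c, rfl⟩ := Option.ne_none_iff_exists.1 hc.symm
  obtain ⟨d, rfl⟩ := Option.ne_none_iff_exists.1 hd.symm
  obtain ⟨e, rfl⟩ := Option.ne_none_iff_exists.1 he.symm
  obtain ⟨⟨hc, hde, hd, he, hcd, hce⟩, ha, hac, had, hae⟩ := h
  simp only [addVertex_adj_none_some, addVertex_adj_some_none, addVertex_adj_some_some]
    at hc hde hd he hcd hce ha hac had hae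
  exact false_of_mem_of_isolated_edge hK3 h2K2 hC5 hI hdom hde hc hd he hcd hce ha hac had hae

end

theorem addVertex_K1plus2K2_free_general {V : Type*} (G : SimpleGraph V) (I : Set V)
    (hK3 : G.CliqueFree 3)
    (hK1plus2K2 : ¬ Nonempty (K1plus2K2 ↪g G))
    (hK1plusC5 : ¬ Nonempty (K1plusC5 ↪g G))
    (hC6 : ¬ Nonempty (C6 ↪g G))
    (hind : IsIndep G I)
    (hmax : ∀ J : Set V, IsIndep G J → I ⊆ J → J = I) :
    ¬ Nonempty (K1plus2K2 ↪g addVertex G I) := by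
  have hdom : ∀ v ∉ I, ∃ x ∈ I, G.Adj x v := fun _ => hind.exists_adj_of_maximal hmax
  have h2K2 : ∀ a b c d e, ¬G.IsK1plus2K2 a b c d e := by
    simpa [nonempty_K1plus2K2_embedding_iff] using hK1plus2K2
  have endpoint {a b c d e : Option V} (h : (addVertex G I).IsK1plus2K2 a b c d e) :
      ∃ v, some v = b := Option.ne_none_iff_exists.1 fun hb =>
    not_isK1plus2K2_addVertex_snd_none hK3 h2K2 hK1plusC5 hind hdom (hb ▸ h)
  rw [nonempty_K1plus2K2_embedding_iff]
  rintro ⟨a, b, c, d, e, h⟩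
  obtain ⟨b, rfl⟩ := endpoint h
  obtain ⟨c, rfl⟩ := endpoint h.swap_left
  obtain ⟨d, rfl⟩ := endpoint h.swap
  obtain ⟨e, rfl⟩ := endpoint h.swap.swap_left
  cases a with
  | none => exact not_isK1plus2K2_addVertex_none hK3 h2K2 hK1plusC5 hC6 hind hdom h
  | some a => exact h2K2 a b c d e (isK1plus2K2_addVertex_some.1 h)

theorem addVertex_K1plus2K2_free {V : Type*} [Fintype V] (G : SimpleGraph V) (I : Set V)
    (hK3 : G.CliqueFree 3)
    (hK1plus2K2 : ¬ Nonempty (K1plus2K2 ↪g G))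
    (hK1plusC5 : ¬ Nonempty (K1plusC5 ↪g G))
    (hC6 : ¬ Nonempty (C6 ↪g G))
    (hind : IsIndep G I)
    (hmax : ∀ J : Set V, IsIndep G J → I ⊆ J → J = I) :
    ¬ Nonempty (K1plus2K2 ↪g addVertex G I) :=
  addVertex_K1plus2K2_free_general G I hK3 hK1plus2K2 hK1plusC5 hC6 hind hmax
end

section
/- Let G be a finite graph that is K_3-free, (K_1+2K_2)-free, and (K_1+C_5)-free, and let I be a maximal independent set of G. Then the graph G' obtained by adding a new vertex v' adjacent exactly to the vertices of I is (K_1+C_5)-free. -/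
instance : DecidableRel K1plus2K2.Adj := fun a b =>
  decidable_of_iff _ (SimpleGraph.fromRel_adj _ a b).symm

instance : DecidableRel K1plusC5.Adj := fun a b =>
  decidable_of_iff _ (SimpleGraph.fromRel_adj _ a b).symm

lemma addVertex_adj_some {V : Type*} (G : SimpleGraph V) (I : Set V) (x y : V) :
    (addVertex G I).Adj (some x) (some y) ↔ G.Adj x y := by
  simp only [addVertex, SimpleGraph.fromRel_adj]
  constructor
  · rintro ⟨hne, h | h⟩ <;>
      rcases h with ⟨a, b, ha, hb, hab⟩ | ⟨h, _⟩ <;> simp_all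
    exact hab.symm
  · intro h
    exact ⟨by simpa using h.ne, Or.inl (Or.inl ⟨x, y, rfl, rfl, h⟩)⟩

lemma addVertex_adj_none {V : Type*} (G : SimpleGraph V) (I : Set V) (x : V) :
    (addVertex G I).Adj none (some x) ↔ x ∈ I := by
  simp only [addVertex, SimpleGraph.fromRel_adj]
  constructor
  · rintro ⟨hne, h | h⟩ <;>
      rcases h with ⟨a, b, ha, hb, hab⟩ | ⟨h, y, hy, hxy⟩ <;> simp_all
  · intro h
    exact ⟨by simp, Or.inl (Or.inr ⟨trivial, x, h, rfl⟩)⟩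

lemma exists_adj_mem {V : Type*} {G : SimpleGraph V} {I : Set V} (hind : IsIndep G I)
    (hmax : ∀ J : Set V, IsIndep G J → I ⊆ J → J = I) {x : V} (hx : x ∉ I) :
    ∃ w ∈ I, G.Adj x w := by
  by_contra h
  push_neg at h
  have hJ : IsIndep G (insert x I) := by
    intro a ha b hb
    rw [Set.mem_insert_iff] at ha hb
    rcases ha with rfl | ha <;> rcases hb with rfl | hb
    · exact G.irrefl
    · exact h b hb
    · exact fun hadj => h a ha hadj.symm
    · exact hind a ha b hb
  have := hmax _ hJ (Set.subset_insert x I)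
  exact hx (this ▸ Set.mem_insert x I)

lemma no2K2 {V : Type*} {G : SimpleGraph V} (h : ¬ Nonempty (K1plus2K2 ↪g G))
    {p a b c d : V}
    (hpa : p ≠ a) (hpb : p ≠ b) (hpc : p ≠ c) (hpd : p ≠ d)
    (hac : a ≠ c) (had : a ≠ d) (hbc : b ≠ c) (hbd : b ≠ d)
    (eab : G.Adj a b) (ecd : G.Adj c d)
    (npa : ¬ G.Adj p a) (npb : ¬ G.Adj p b) (npc : ¬ G.Adj p c) (npd : ¬ G.Adj p d)
    (nac : ¬ G.Adj a c) (nad : ¬ G.Adj a d) (nbc : ¬ G.Adj b c) (nbd : ¬ G.Adj b d) :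
    False := by
  apply h
  have hab := eab.ne
  have hcd := ecd.ne
  have npa' : ¬ G.Adj a p := fun h' => npa h'.symm
  have npb' : ¬ G.Adj b p := fun h' => npb h'.symm
  have npc' : ¬ G.Adj c p := fun h' => npc h'.symm
  have npd' : ¬ G.Adj d p := fun h' => npd h'.symm
  have nac' : ¬ G.Adj c a := fun h' => nac h'.symm
  have nad' : ¬ G.Adj d a := fun h' => nad h'.symm
  have nbc' : ¬ G.Adj c b := fun h' => nbc h'.symm
  have nbd' : ¬ G.Adj d b := fun h' => nbd h'.symm
  refine ⟨⟨⟨![p,a,b,c,d], ?_⟩, ?_⟩⟩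
  · intro i j hij
    fin_cases i <;> fin_cases j <;> simp_all
  · intro i j
    fin_cases i <;> fin_cases j <;>
      simp only [Matrix.cons_val_zero, Matrix.cons_val_one, Matrix.head_cons,
        Matrix.cons_val_two, Matrix.tail_cons, Matrix.cons_val_three, Matrix.cons_val_four,
        Matrix.cons_val_fin_one] <;>
      first
        | exact iff_of_true eab (by decide)
        | exact iff_of_true eab.symm (by decide)
        | exact iff_of_true ecd (by decide)
        | exact iff_of_true ecd.symm (by decide)
        | exact iff_of_false (G.irrefl) (by decide)
        | exact iff_of_false (by assumption) (by decide)

section Main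

variable {V : Type*} {G : SimpleGraph V} {I : Set V}

private lemma triconf (hK3 : G.CliqueFree 3) :
    ∀ a b c : V, G.Adj a b → G.Adj a c → G.Adj b c → False := fun a b c hab hac hbc => by
  classical
  exact hK3 {a,b,c} (SimpleGraph.is3Clique_iff.2 ⟨a, b, c, hab, hac, hbc, rfl⟩)

private lemma neMem {x y : V} (hx : x ∈ I) (hy : y ∉ I) : x ≠ y := fun e => hy (e ▸ hx)

private lemma neAdj {x y z : V} (hx : G.Adj x z) (hn : ¬ G.Adj y z) : x ≠ y :=
  fun e => hn (e ▸ hx)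

/-- Case: `w1 ∈ I` is adjacent to `c1` and `c3` on an induced `C₅` disjoint from `I`. -/
private lemma lemB (hK3 : G.CliqueFree 3) (h2 : ¬ Nonempty (K1plus2K2 ↪g G))
    (hind : IsIndep G I) (hmax : ∀ J : Set V, IsIndep G J → I ⊆ J → J = I)
    {c1 c2 c3 c4 c5 w1 : V}
    (m1 : c1 ∉ I) (m2 : c2 ∉ I) (m3 : c3 ∉ I) (m4 : c4 ∉ I) (m5 : c5 ∉ I)
    (e12 : G.Adj c1 c2) (e23 : G.Adj c2 c3) (e34 : G.Adj c3 c4)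
    (e45 : G.Adj c4 c5) (e51 : G.Adj c5 c1)
    (n13 : ¬ G.Adj c1 c3) (n14 : ¬ G.Adj c1 c4) (n24 : ¬ G.Adj c2 c4)
    (n25 : ¬ G.Adj c2 c5) (n35 : ¬ G.Adj c3 c5)
    (d13 : c1 ≠ c3) (d14 : c1 ≠ c4) (d24 : c2 ≠ c4) (d25 : c2 ≠ c5) (d35 : c3 ≠ c5)
    (hw1I : w1 ∈ I) (a1 : G.Adj c1 w1) (h13 : G.Adj w1 c3) : False := by
  have tri := triconf hK3
  have nw12 : ¬ G.Adj w1 c2 := fun h => tri w1 c1 c2 a1.symm h e12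
  have nw14 : ¬ G.Adj w1 c4 := fun h => tri w1 c3 c4 h13 h e34
  have nw15 : ¬ G.Adj w1 c5 := fun h => tri w1 c5 c1 h a1.symm e51
  obtain ⟨w2, hw2I, a2⟩ := exists_adj_mem hind hmax m2
  have nw21 : ¬ G.Adj w2 c1 := fun h => tri w2 c1 c2 h a2.symm e12
  have nw23 : ¬ G.Adj w2 c3 := fun h => tri w2 c2 c3 a2.symm h e23
  by_cases h24 : G.Adj w2 c4
  · obtain ⟨w5, hw5I, a5⟩ := exists_adj_mem hind hmax m5
    have nw51 : ¬ G.Adj w5 c1 := fun h => tri w5 c5 c1 a5.symm h e51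
    have nw54 : ¬ G.Adj w5 c4 := fun h => tri w5 c4 c5 h a5.symm e45
    exact no2K2 h2 (neAdj a5.symm nw15) (neMem hw5I m1) ((neAdj h24 nw54).symm)
      (neMem hw5I m4) (neAdj h13 nw23) (neMem hw1I m4) ((neMem hw2I m1).symm) d14
      a1.symm h24
      (hind w5 hw5I w1 hw1I) nw51 (hind w5 hw5I w2 hw2I) nw54
      (hind w1 hw1I w2 hw2I) nw14 (fun h => nw21 h.symm) n14
  by_cases h25 : G.Adj w2 c5
  · obtain ⟨w4, hw4I, a4⟩ := exists_adj_mem hind hmax m4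
    have nw43 : ¬ G.Adj w4 c3 := fun h => tri w4 c3 c4 h a4.symm e34
    have nw45 : ¬ G.Adj w4 c5 := fun h => tri w4 c4 c5 a4.symm h e45
    exact no2K2 h2 (neAdj a4.symm nw14) (neMem hw4I m3) ((neAdj h25 nw45).symm)
      (neMem hw4I m5) (neAdj h13 nw23) (neMem hw1I m5) ((neMem hw2I m3).symm) d35
      h13 h25
      (hind w4 hw4I w1 hw1I) nw43 (hind w4 hw4I w2 hw2I) nw45
      (hind w1 hw1I w2 hw2I) nw15 (fun h => nw23 h.symm) n35
  · exact no2K2 h2 (neAdj h13 nw23) (neMem hw1I m2) (neMem hw1I m4) (neMem hw1I m5)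
      (neMem hw2I m4) (neMem hw2I m5) d24 d25
      a2.symm e45
      (hind w1 hw1I w2 hw2I) nw12 nw14 nw15
      h24 h25 n24 n25

/-- Case A: an induced `C₅` in `G` disjoint from `I` is impossible. -/
private lemma lemA (hK3 : G.CliqueFree 3) (h2 : ¬ Nonempty (K1plus2K2 ↪g G))
    (hind : IsIndep G I) (hmax : ∀ J : Set V, IsIndep G J → I ⊆ J → J = I)
    {c1 c2 c3 c4 c5 : V}
    (m1 : c1 ∉ I) (m2 : c2 ∉ I) (m3 : c3 ∉ I) (m4 : c4 ∉ I) (m5 : c5 ∉ I)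
    (e12 : G.Adj c1 c2) (e23 : G.Adj c2 c3) (e34 : G.Adj c3 c4)
    (e45 : G.Adj c4 c5) (e51 : G.Adj c5 c1)
    (n13 : ¬ G.Adj c1 c3) (n14 : ¬ G.Adj c1 c4) (n24 : ¬ G.Adj c2 c4)
    (n25 : ¬ G.Adj c2 c5) (n35 : ¬ G.Adj c3 c5)
    (d13 : c1 ≠ c3) (d14 : c1 ≠ c4) (d24 : c2 ≠ c4) (d25 : c2 ≠ c5) (d35 : c3 ≠ c5) :
    False := by
  have tri := triconf hK3
  obtain ⟨w1, hw1I, a1⟩ := exists_adj_mem hind hmax m1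
  by_cases h13 : G.Adj w1 c3
  · exact lemB hK3 h2 hind hmax m1 m2 m3 m4 m5 e12 e23 e34 e45 e51
      n13 n14 n24 n25 n35 d13 d14 d24 d25 d35 hw1I a1 h13
  by_cases h14 : G.Adj w1 c4
  · exact lemB hK3 h2 hind hmax m1 m5 m4 m3 m2 e51.symm e45.symm e34.symm e23.symm e12.symm
      n14 n13 (fun h => n35 h.symm) (fun h => n25 h.symm) (fun h => n24 h.symm)
      d14 d13 d35.symm d25.symm d24.symm hw1I a1 h14
  have nw12 : ¬ G.Adj w1 c2 := fun h => tri w1 c1 c2 a1.symm h e12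
  have nw15 : ¬ G.Adj w1 c5 := fun h => tri w1 c5 c1 h a1.symm e51
  obtain ⟨w2, hw2I, a2⟩ := exists_adj_mem hind hmax m2
  have nw21 : ¬ G.Adj w2 c1 := fun h => tri w2 c1 c2 h a2.symm e12
  have nw23 : ¬ G.Adj w2 c3 := fun h => tri w2 c2 c3 a2.symm h e23
  by_cases h24 : G.Adj w2 c4
  · obtain ⟨w5, hw5I, a5⟩ := exists_adj_mem hind hmax m5
    have nw51 : ¬ G.Adj w5 c1 := fun h => tri w5 c5 c1 a5.symm h e51
    have nw54 : ¬ G.Adj w5 c4 := fun h => tri w5 c4 c5 h a5.symm e45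
    exact no2K2 h2 (neAdj a5.symm nw15) (neMem hw5I m1) ((neAdj h24 nw54).symm)
      (neMem hw5I m4) ((neAdj a2.symm nw12).symm) (neMem hw1I m4) ((neMem hw2I m1).symm) d14
      a1.symm h24
      (hind w5 hw5I w1 hw1I) nw51 (hind w5 hw5I w2 hw2I) nw54
      (hind w1 hw1I w2 hw2I) h14 (fun h => nw21 h.symm) n14
  · exact no2K2 h2 (neAdj a2.symm nw12) (neMem hw2I m1) (neMem hw2I m3) (neMem hw2I m4)
      (neMem hw1I m3) (neMem hw1I m4) d13 d14
      a1.symm e34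
      (hind w2 hw2I w1 hw1I) nw21 nw23 h24
      h13 h14 n13 n14

/-- Case B: the new vertex lies on the `C₅`. -/
private lemma lemCaseB (hK3 : G.CliqueFree 3) (h2 : ¬ Nonempty (K1plus2K2 ↪g G))
    (hind : IsIndep G I) (hmax : ∀ J : Set V, IsIndep G J → I ⊆ J → J = I)
    {x b c d e : V}
    (hbI : b ∈ I) (heI : e ∈ I) (hxI : x ∉ I)
    (ebc : G.Adj b c) (ecd : G.Adj c d) (ede : G.Adj d e)
    (nbd : ¬ G.Adj b d) (nbe : ¬ G.Adj b e) (nce : ¬ G.Adj c e)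
    (nxb : ¬ G.Adj x b) (nxc : ¬ G.Adj x c) (nxd : ¬ G.Adj x d) (nxe : ¬ G.Adj x e)
    (dxb : x ≠ b) (dxc : x ≠ c) (dxd : x ≠ d) (dxe : x ≠ e)
    (dbd : b ≠ d) (dbe : b ≠ e) (dce : c ≠ e) : False := by
  have tri := triconf hK3
  obtain ⟨w, hwI, axw⟩ := exists_adj_mem hind hmax hxI
  have dwb : w ≠ b := neAdj axw.symm (fun h => nxb h.symm)
  have dwc : w ≠ c := neAdj axw.symm (fun h => nxc h.symm)
  have dwd : w ≠ d := neAdj axw.symm (fun h => nxd h.symm)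
  have dwe : w ≠ e := neAdj axw.symm (fun h => nxe h.symm)
  by_cases hwc : G.Adj w c
  · have nwd : ¬ G.Adj w d := fun h => tri w c d hwc h ecd
    exact no2K2 h2 dxb.symm dwb.symm dbd dbe dxd dxe dwd dwe
      axw ede
      (fun h => nxb h.symm) (hind b hbI w hwI) nbd nbe
      nxd nxe nwd (hind w hwI e heI)
  · exact no2K2 h2 dxe.symm dwe.symm dbe.symm dce.symm dxb dxc dwb dwc
      axw ebc
      (fun h => nxe h.symm) (hind e heI w hwI) (fun h => nbe h.symm) (fun h => nce h.symm)
      nxb nxc (hind w hwI b hbI) hwc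

lemma fj_some (f : K1plusC5 ↪g addVertex G I) {i j : Fin 6} (h : f i = none) (hij : i ≠ j) :
    ∃ x, f j = some x := by
  cases hj : f j with
  | none => exact absurd (f.injective (h.trans hj.symm)) hij
  | some x => exact ⟨x, rfl⟩

lemma emb_adj (f : K1plusC5 ↪g addVertex G I) {i j : Fin 6} {x y : V}
    (hi : f i = some x) (hj : f j = some y) :
    G.Adj x y ↔ K1plusC5.Adj i j := by
  rw [← f.map_rel_iff, hi, hj, addVertex_adj_some]

lemma emb_mem (f : K1plusC5 ↪g addVertex G I) {i j : Fin 6} {x : V}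
    (hi : f i = none) (hj : f j = some x) :
    x ∈ I ↔ K1plusC5.Adj i j := by
  rw [← f.map_rel_iff, hi, hj, addVertex_adj_none]

lemma emb_ne (f : K1plusC5 ↪g addVertex G I) {i j : Fin 6} {x y : V}
    (hij : i ≠ j) (hi : f i = some x) (hj : f j = some y) : x ≠ y := by
  intro h
  exact hij (f.injective (by rw [hi, hj, h]))

/-- The case where the new vertex is the isolated vertex of `K₁+C₅`. -/
private lemma lemCaseA' (hK3 : G.CliqueFree 3) (h2 : ¬ Nonempty (K1plus2K2 ↪g G))
    (hind : IsIndep G I) (hmax : ∀ J : Set V, IsIndep G J → I ⊆ J → J = I)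
    (f : K1plusC5 ↪g addVertex G I) (h0 : f 0 = none) : False := by
  obtain ⟨x1, h1⟩ := fj_some f h0 (show (0:Fin 6) ≠ 1 by decide)
  obtain ⟨x2, hh2⟩ := fj_some f h0 (show (0:Fin 6) ≠ 2 by decide)
  obtain ⟨x3, h3⟩ := fj_some f h0 (show (0:Fin 6) ≠ 3 by decide)
  obtain ⟨x4, h4⟩ := fj_some f h0 (show (0:Fin 6) ≠ 4 by decide)
  obtain ⟨x5, h5⟩ := fj_some f h0 (show (0:Fin 6) ≠ 5 by decide)
  exact lemA hK3 h2 hind hmax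
    (fun h => absurd ((emb_mem f h0 h1).1 h) (by decide))
    (fun h => absurd ((emb_mem f h0 hh2).1 h) (by decide))
    (fun h => absurd ((emb_mem f h0 h3).1 h) (by decide))
    (fun h => absurd ((emb_mem f h0 h4).1 h) (by decide))
    (fun h => absurd ((emb_mem f h0 h5).1 h) (by decide))
    ((emb_adj f h1 hh2).2 (by decide)) ((emb_adj f hh2 h3).2 (by decide))
    ((emb_adj f h3 h4).2 (by decide)) ((emb_adj f h4 h5).2 (by decide))
    ((emb_adj f h5 h1).2 (by decide))
    (fun h => absurd ((emb_adj f h1 h3).1 h) (by decide))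
    (fun h => absurd ((emb_adj f h1 h4).1 h) (by decide))
    (fun h => absurd ((emb_adj f hh2 h4).1 h) (by decide))
    (fun h => absurd ((emb_adj f hh2 h5).1 h) (by decide))
    (fun h => absurd ((emb_adj f h3 h5).1 h) (by decide))
    (emb_ne f (by decide) h1 h3) (emb_ne f (by decide) h1 h4)
    (emb_ne f (by decide) hh2 h4) (emb_ne f (by decide) hh2 h5)
    (emb_ne f (by decide) h3 h5)

/-- The case where the new vertex is at position 1 of the cycle. -/
private lemma lemNone1 (hK3 : G.CliqueFree 3) (h2 : ¬ Nonempty (K1plus2K2 ↪g G))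
    (hind : IsIndep G I) (hmax : ∀ J : Set V, IsIndep G J → I ⊆ J → J = I)
    (f : K1plusC5 ↪g addVertex G I) (h1 : f 1 = none) : False := by
  obtain ⟨x0, h0⟩ := fj_some f h1 (show (1:Fin 6) ≠ 0 by decide)
  obtain ⟨x2, hh2⟩ := fj_some f h1 (show (1:Fin 6) ≠ 2 by decide)
  obtain ⟨x3, h3⟩ := fj_some f h1 (show (1:Fin 6) ≠ 3 by decide)
  obtain ⟨x4, h4⟩ := fj_some f h1 (show (1:Fin 6) ≠ 4 by decide)
  obtain ⟨x5, h5⟩ := fj_some f h1 (show (1:Fin 6) ≠ 5 by decide)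
  exact lemCaseB hK3 h2 hind hmax
    ((emb_mem f h1 hh2).2 (by decide)) ((emb_mem f h1 h5).2 (by decide))
    (fun h => absurd ((emb_mem f h1 h0).1 h) (by decide))
    ((emb_adj f hh2 h3).2 (by decide)) ((emb_adj f h3 h4).2 (by decide))
    ((emb_adj f h4 h5).2 (by decide))
    (fun h => absurd ((emb_adj f hh2 h4).1 h) (by decide))
    (fun h => absurd ((emb_adj f hh2 h5).1 h) (by decide))
    (fun h => absurd ((emb_adj f h3 h5).1 h) (by decide))
    (fun h => absurd ((emb_adj f h0 hh2).1 h) (by decide))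
    (fun h => absurd ((emb_adj f h0 h3).1 h) (by decide))
    (fun h => absurd ((emb_adj f h0 h4).1 h) (by decide))
    (fun h => absurd ((emb_adj f h0 h5).1 h) (by decide))
    (emb_ne f (by decide) h0 hh2) (emb_ne f (by decide) h0 h3)
    (emb_ne f (by decide) h0 h4) (emb_ne f (by decide) h0 h5)
    (emb_ne f (by decide) hh2 h4) (emb_ne f (by decide) hh2 h5)
    (emb_ne f (by decide) h3 h5)

end Main

/-- Rotation automorphism of `K₁+C₅`: fixes 0, rotates the cycle. -/
def rotC5 : K1plusC5 ≃g K1plusC5 where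
  toEquiv := ⟨![0,2,3,4,5,1], ![0,5,1,2,3,4], by decide, by decide⟩
  map_rel_iff' := by intro a b; revert a b; decide

theorem addVertex_K1plusC5_free {V : Type*} [Fintype V] (G : SimpleGraph V) (I : Set V)
    (hK3 : G.CliqueFree 3)
    (hK1plus2K2 : ¬ Nonempty (K1plus2K2 ↪g G))
    (hK1plusC5 : ¬ Nonempty (K1plusC5 ↪g G))
    (hind : IsIndep G I)
    (hmax : ∀ J : Set V, IsIndep G J → I ⊆ J → J = I) :
    ¬ Nonempty (K1plusC5 ↪g addVertex G I) := by
  rintro ⟨f⟩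
  by_cases hn : ∃ i, f i = none
  · obtain ⟨i, hi⟩ := hn
    have rotk : ∀ (g : K1plusC5 ↪g addVertex G I) (j : Fin 6),
        (g.comp rotC5.toEmbedding) j = g (rotC5 j) := fun _ _ => rfl
    fin_cases i
    · exact lemCaseA' hK3 hK1plus2K2 hind hmax f hi
    · exact lemNone1 hK3 hK1plus2K2 hind hmax f hi
    · exact lemNone1 hK3 hK1plus2K2 hind hmax (f.comp rotC5.toEmbedding)
        (by rw [rotk, show rotC5 (1:Fin 6) = 2 from by decide]; exact hi)
    · exact lemNone1 hK3 hK1plus2K2 hind hmax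
        ((f.comp rotC5.toEmbedding).comp rotC5.toEmbedding)
        (by rw [rotk, rotk, show rotC5 (rotC5 (1:Fin 6)) = 3 from by decide]; exact hi)
    · exact lemNone1 hK3 hK1plus2K2 hind hmax
        (((f.comp rotC5.toEmbedding).comp rotC5.toEmbedding).comp rotC5.toEmbedding)
        (by rw [rotk, rotk, rotk,
              show rotC5 (rotC5 (rotC5 (1:Fin 6))) = 4 from by decide]; exact hi)
    · exact lemNone1 hK3 hK1plus2K2 hind hmax
        ((((f.comp rotC5.toEmbedding).comp rotC5.toEmbedding).comp
            rotC5.toEmbedding).comp rotC5.toEmbedding)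
        (by rw [rotk, rotk, rotk, rotk,
              show rotC5 (rotC5 (rotC5 (rotC5 (1:Fin 6)))) = 5 from by decide]; exact hi)
  · push_neg at hn
    apply hK1plusC5
    have hs : ∀ i, ∃ x, f i = some x := by
      intro i
      cases h : f i with
      | none => exact absurd h (hn i)
      | some x => exact ⟨x, rfl⟩
    choose g hg using hs
    refine ⟨⟨⟨g, ?_⟩, ?_⟩⟩
    · intro i j hij
      apply f.injective
      rw [hg i, hg j, hij]
    · intro i j
      rw [← f.map_rel_iff, hg i, hg j, addVertex_adj_some]
      exact Iff.rfl
end
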